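/- arXiv:1809.02189 — 8 statements merged into one kernel-verified Lean document; each statement's English description precedes it below -/
import Mathlib

section
/- For α ∈ (0,1) and f ∈ C²[a,b], the Caputo–Fabrizio derivative CF_a D^α f(t) converges pointwise as α → 1⁻ to f'(t) for every t ∈ (a,b]. -/
open MeasureTheory Filter Real Set intervalIntegral

/-- Caputo–Fabrizio fractional derivative of order `α` with base point `a`,
expressed in terms of the derivative `f'` of the function. -/
noncomputable def cfD (α a : ℝ) (f' : ℝ → ℝ) (t : ℝ) : ℝ :=
  (1 / (1 - α)) * ∫ τ in a..t, f' τ * Real.exp (-(α * (t - τ)) / (1 - α))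

lemma expDeriv (k t τ : ℝ) :
    HasDerivAt (fun τ : ℝ => Real.exp (-(k*(t-τ)))) (Real.exp (-(k*(t-τ))) * k) τ := by
  have h1 : HasDerivAt (fun τ : ℝ => -(k*(t-τ))) k τ := by
    have h : HasDerivAt (fun τ : ℝ => k*τ - k*t) k τ := by
      simpa using ((hasDerivAt_id τ).const_mul k).sub_const (k*t)
    have he : (fun τ : ℝ => -(k*(t-τ))) = fun τ : ℝ => k*τ - k*t := by funext x; ring
    rw [he]; exact h
  exact h1.exp

lemma intA (k a t : ℝ) (hk : 0 < k) :
    ∫ τ in a..t, Real.exp (-(k*(t-τ))) = (1 - Real.exp (-(k*(t-a))))/k := by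
  have h : ∀ τ ∈ Set.uIcc a t, HasDerivAt (fun τ : ℝ => Real.exp (-(k*(t-τ)))/k)
      (Real.exp (-(k*(t-τ)))) τ := by
    intro τ _
    have := (expDeriv k t τ).div_const k
    exact this.congr_deriv (mul_div_cancel_right₀ _ hk.ne')
  have hint : IntervalIntegrable (fun τ : ℝ => Real.exp (-(k*(t-τ)))) volume a t :=
    (Real.continuous_exp.comp ((continuous_const.mul (continuous_const.sub continuous_id)).neg)).intervalIntegrable a t
  rw [intervalIntegral.integral_eq_sub_of_hasDerivAt h hint]
  simp [sub_self]
  ring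

lemma intB (k a t : ℝ) (hk : 0 < k) (hat : a ≤ t) :
    ∫ τ in a..t, (t-τ) * Real.exp (-(k*(t-τ))) ≤ 1/k^2 := by
  have h : ∀ τ ∈ Set.uIcc a t, HasDerivAt
      (fun τ : ℝ => ((t-τ)/k + 1/k^2) * Real.exp (-(k*(t-τ))))
      ((t-τ) * Real.exp (-(k*(t-τ)))) τ := by
    intro τ _
    have h1 : HasDerivAt (fun τ : ℝ => (t-τ)/k + 1/k^2) (-(1/k)) τ := by
      have h0 : HasDerivAt (fun τ : ℝ => (t-τ)/k) (-(1/k)) τ := by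
        have := ((hasDerivAt_id τ).const_sub t).div_const k
        exact this.congr_deriv (by ring)
      exact h0.add_const (1/k^2)
    have := h1.mul (expDeriv k t τ)
    exact this.congr_deriv (by linear_combination ((t-τ)*Real.exp (-(k*(t-τ))) + Real.exp (-(k*(t-τ)))*k⁻¹) * mul_inv_cancel₀ hk.ne')
  have hint : IntervalIntegrable (fun τ : ℝ => (t-τ) * Real.exp (-(k*(t-τ)))) volume a t :=
    ((continuous_const.sub continuous_id).mul (Real.continuous_exp.comp ((continuous_const.mul (continuous_const.sub continuous_id)).neg))).intervalIntegrable a t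
  rw [intervalIntegral.integral_eq_sub_of_hasDerivAt h hint]
  have h2 : 0 ≤ ((t-a)/k + 1/k^2) * Real.exp (-(k*(t-a))) := by
    apply mul_nonneg _ (Real.exp_nonneg _)
    have h5 : 0 ≤ (t-a)/k := div_nonneg (by linarith) hk.le
    have h6 : 0 ≤ 1/k^2 := by positivity
    linarith
  have h3 : (t-t)/k + 1/k^2 = 1/k^2 := by simp
  have h4 : -(k*(t-t)) = 0 := by ring
  rw [h3, h4, Real.exp_zero, mul_one]
  linarith

theorem stmt1 (a b : ℝ) (hab : a < b) (f f' f'' : ℝ → ℝ)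
    (hder : ∀ t ∈ Set.Icc a b, HasDerivAt f (f' t) t)
    (hder2 : ∀ t ∈ Set.Icc a b, HasDerivAt f' (f'' t) t)
    (hcont : ContinuousOn f'' (Set.Icc a b))
    (t : ℝ) (ht : t ∈ Set.Ioc a b) :
    Filter.Tendsto (fun α : ℝ => cfD α a f' t)
      (nhdsWithin 1 (Set.Ioo (0:ℝ) 1)) (nhds (f' t)) := by
  obtain ⟨hta, htb⟩ := ht
  set l := nhdsWithin (1:ℝ) (Set.Ioo (0:ℝ) 1) with hl
  have hf'c : ContinuousOn f' (Set.Icc a b) := fun x hx =>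
    ((hder2 x hx).continuousAt).continuousWithinAt
  obtain ⟨M, hM⟩ := (isCompact_Icc (a := a) (b := b)).exists_bound_of_continuousOn hcont
  have hM0 : 0 ≤ M := le_trans (norm_nonneg _) (hM a ⟨le_rfl, hab.le⟩)
  have hLip : ∀ τ ∈ Set.Icc a b, |f' τ - f' t| ≤ M * |τ - t| := by
    intro τ hτ
    have := Convex.norm_image_sub_le_of_norm_hasDerivWithin_le
      (f := f') (f' := f'') (C := M) (s := Set.Icc a b)
      (fun x hx => (hder2 x hx).hasDerivWithinAt) hM (convex_Icc a b) ⟨hta.le, htb⟩ hτ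
    simpa [Real.norm_eq_abs] using this
  have hsub : Set.uIcc a t ⊆ Set.Icc a b := by
    rw [Set.uIcc_of_le hta.le]; exact Set.Icc_subset_Icc le_rfl htb
  have hf'ct : ContinuousOn f' (Set.uIcc a t) := hf'c.mono hsub
  -- decomposition
  have hmem : ∀ᶠ α in l, α ∈ Set.Ioo (0:ℝ) 1 := self_mem_nhdsWithin
  have hdecomp : ∀ α ∈ Set.Ioo (0:ℝ) 1, cfD α a f' t =
      (1/(1-α)) * (∫ τ in a..t, (f' τ - f' t) * Real.exp (-(α/(1-α)*(t-τ))))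
      + f' t * ((1 - Real.exp (-(α/(1-α)*(t-a))))/α) := by
    intro α hα
    have hα0 := hα.1
    have hα1 : 0 < 1 - α := by linarith [hα.2]
    set k := α/(1-α) with hkdef
    have hk : 0 < k := div_pos hα0 hα1
    have hE : Continuous (fun τ : ℝ => Real.exp (-(k*(t-τ)))) :=
      Real.continuous_exp.comp ((continuous_const.mul (continuous_const.sub continuous_id)).neg)
    have hIe : IntervalIntegrable (fun τ : ℝ => Real.exp (-(k*(t-τ)))) volume a t :=
      hE.intervalIntegrable a t
    have hI1 : IntervalIntegrable (fun τ : ℝ => (f' τ - f' t) * Real.exp (-(k*(t-τ)))) volume a t :=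
      ((hf'ct.sub continuousOn_const).mul hE.continuousOn).intervalIntegrable
    have step1 : cfD α a f' t = (1/(1-α)) * ∫ τ in a..t, f' τ * Real.exp (-(k*(t-τ))) := by
      unfold cfD
      congr 1
      apply intervalIntegral.integral_congr
      intro τ _
      congr 1
      rw [hkdef]
      field_simp
    rw [step1]
    have step2 : (∫ τ in a..t, f' τ * Real.exp (-(k*(t-τ)))) =
        (∫ τ in a..t, (f' τ - f' t) * Real.exp (-(k*(t-τ))))
        + f' t * ∫ τ in a..t, Real.exp (-(k*(t-τ))) := by
      rw [← intervalIntegral.integral_const_mul, ← intervalIntegral.integral_add hI1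
        (hIe.const_mul (f' t))]
      apply intervalIntegral.integral_congr
      intro τ _
      ring
    rw [step2, intA k a t hk, mul_add]
    congr 1
    rw [hkdef]
    field_simp
  -- term 1 tends to 0
  have hbound : ∀ᶠ α in l, ‖(1/(1-α)) *
      (∫ τ in a..t, (f' τ - f' t) * Real.exp (-(α/(1-α)*(t-τ))))‖ ≤ M * ((1-α)/α^2) := by
    filter_upwards [hmem] with α hα
    have hα0 := hα.1
    have hα1 : 0 < 1 - α := by linarith [hα.2]
    set k := α/(1-α) with hkdef
    have hk : 0 < k := div_pos hα0 hα1
    have hE : Continuous (fun τ : ℝ => Real.exp (-(k*(t-τ)))) :=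
      Real.continuous_exp.comp ((continuous_const.mul (continuous_const.sub continuous_id)).neg)
    have hI1 : IntervalIntegrable (fun τ : ℝ => (f' τ - f' t) * Real.exp (-(k*(t-τ)))) volume a t :=
      ((hf'ct.sub continuousOn_const).mul hE.continuousOn).intervalIntegrable
    have habs : |∫ τ in a..t, (f' τ - f' t) * Real.exp (-(k*(t-τ)))| ≤
        ∫ τ in a..t, M * ((t-τ) * Real.exp (-(k*(t-τ)))) := by
      calc |∫ τ in a..t, (f' τ - f' t) * Real.exp (-(k*(t-τ)))|
          ≤ ∫ τ in a..t, |(f' τ - f' t) * Real.exp (-(k*(t-τ)))| :=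
            intervalIntegral.abs_integral_le_integral_abs hta.le
        _ ≤ ∫ τ in a..t, M * ((t-τ) * Real.exp (-(k*(t-τ)))) := by
            apply intervalIntegral.integral_mono_on hta.le hI1.abs
            · exact (continuous_const.mul ((continuous_const.sub continuous_id).mul hE)).intervalIntegrable a t
            · intro τ hτ
              rw [abs_mul, Real.abs_exp]
              have h1 : |f' τ - f' t| ≤ M * (t - τ) := by
                have hh := hLip τ (Set.Icc_subset_Icc le_rfl htb hτ)
                have heq : |τ - t| = t - τ := by
                  rw [abs_sub_comm]; exact abs_of_nonneg (by linarith [hτ.2])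
                rwa [heq] at hh
              have := mul_le_mul_of_nonneg_right h1 (Real.exp_nonneg (-(k*(t-τ))))
              linarith [this]
    have hI2 : (∫ τ in a..t, M * ((t-τ) * Real.exp (-(k*(t-τ))))) ≤ M * (1/k^2) := by
      rw [intervalIntegral.integral_const_mul]
      exact mul_le_mul_of_nonneg_left (intB k a t hk hta.le) hM0
    rw [Real.norm_eq_abs, abs_mul]
    have h1a : |1/(1-α)| = 1/(1-α) := abs_of_pos (by positivity)
    rw [h1a]
    have hfin : (1/(1-α)) * (M * (1/k^2)) = M * ((1-α)/α^2) := by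
      rw [hkdef]; field_simp
    calc 1/(1-α) * |∫ τ in a..t, (f' τ - f' t) * Real.exp (-(k*(t-τ)))|
        ≤ 1/(1-α) * (M * (1/k^2)) := by
          apply mul_le_mul_of_nonneg_left _ (by positivity)
          exact le_trans habs hI2
      _ = M * ((1-α)/α^2) := hfin
  have hg : Tendsto (fun α : ℝ => M * ((1-α)/α^2)) l (nhds 0) := by
    have hc : ContinuousAt (fun α : ℝ => M * ((1-α)/α^2)) 1 := by
      apply ContinuousAt.mul continuousAt_const
      apply ContinuousAt.div
      · fun_prop
      · fun_prop
      · norm_num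
    have := hc.tendsto.mono_left (nhdsWithin_le_nhds (s := Set.Ioo (0:ℝ) 1))
    simpa only [sub_self, zero_div, mul_zero] using this
  have T1 : Tendsto (fun α : ℝ => (1/(1-α)) *
      (∫ τ in a..t, (f' τ - f' t) * Real.exp (-(α/(1-α)*(t-τ))))) l (nhds 0) :=
    squeeze_zero_norm' hbound hg
  -- term 2 tends to f' t
  have hatTop : Tendsto (fun α : ℝ => α/(1-α)*(t-a)) l atTop := by
    have h1 : Tendsto (fun α : ℝ => 1 - α) l (nhdsWithin 0 (Set.Ioi (0:ℝ))) := by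
      rw [tendsto_nhdsWithin_iff]
      constructor
      · have : ContinuousAt (fun α : ℝ => 1 - α) 1 := by fun_prop
        have := this.tendsto.mono_left (nhdsWithin_le_nhds (s := Set.Ioo (0:ℝ) 1))
        simpa only [sub_self] using this
      · filter_upwards [hmem] with α hα
        exact sub_pos.mpr hα.2
    have h2 : Tendsto (fun α : ℝ => (1-α)⁻¹) l atTop := tendsto_inv_nhdsGT_zero.comp h1
    have h3 : Tendsto (fun α : ℝ => (1-α)⁻¹ - 1) l atTop :=
      tendsto_atTop_add_const_right _ (-1) h2 |>.congr (by intro x; ring)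
    have h4 : Tendsto (fun α : ℝ => α/(1-α)) l atTop := by
      apply h3.congr'
      filter_upwards [hmem] with α hα
      have hα1 : (1:ℝ) - α ≠ 0 := by have := hα.2; intro h; linarith [sub_eq_zero.mp h]
      field_simp
      ring
    exact h4.atTop_mul_const (by linarith)
  have hexp : Tendsto (fun α : ℝ => Real.exp (-(α/(1-α)*(t-a)))) l (nhds 0) :=
    Real.tendsto_exp_neg_atTop_nhds_zero.comp hatTop
  have hαt : Tendsto (fun α : ℝ => α) l (nhds 1) :=
    tendsto_id.mono_left (nhdsWithin_le_nhds (s := Set.Ioo (0:ℝ) 1))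
  have T2 : Tendsto (fun α : ℝ => f' t * ((1 - Real.exp (-(α/(1-α)*(t-a))))/α)) l
      (nhds (f' t)) := by
    have hnum : Tendsto (fun α : ℝ => 1 - Real.exp (-(α/(1-α)*(t-a)))) l (nhds 1) := by
      have := (tendsto_const_nhds (x := (1:ℝ)) (f := l)).sub hexp
      simpa using this
    have hdiv : Tendsto (fun α : ℝ => (1 - Real.exp (-(α/(1-α)*(t-a))))/α) l (nhds 1) := by
      have := hnum.div hαt one_ne_zero
      rw [div_one] at this
      exact this
    have := hdiv.const_mul (f' t)
    simpa using this
  have := T1.add T2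
  rw [zero_add] at this
  apply this.congr'
  filter_upwards [hmem] with α hα
  exact (hdecomp α hα).symm
end

section
/- For f ∈ W¹(a,b) with f(a) = 0 and α ∈ (0,1), the Caputo–Fabrizio integral of the Caputo–Fabrizio derivative recovers f: CF_a I^α (CF_a D^α f)(t) = f(t) for all t ∈ [a,b]. More generally, without the assumption f(a)=0, one has CF_a I^α (CF_a D^α f)(t) = f(t) − f(a). -/
open MeasureTheory Filter Real Set intervalIntegral

/-- Caputo–Fabrizio fractional integral of order `α` with base point `a`. -/
noncomputable def cfI (α a : ℝ) (f : ℝ → ℝ) (t : ℝ) : ℝ :=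
  (1 - α) * f t + α * ∫ τ in a..t, f τ

/-- Fubini on a triangular region for a separable integrand. -/
lemma fubini_tri (a t : ℝ) (hat : a ≤ t) (w v : ℝ → ℝ)
    (hw : IntegrableOn w (Set.Ioc a t)) (hv : Continuous v) :
    (∫ s in a..t, v s * ∫ τ in a..s, w τ) = ∫ τ in a..t, w τ * ∫ s in τ..t, v s := by
  have hE : MeasurableSet {p : ℝ × ℝ | p.2 ≤ p.1} :=
    (isClosed_le continuous_snd continuous_fst).measurableSet
  set F : ℝ × ℝ → ℝ := ({p : ℝ × ℝ | p.2 ≤ p.1}).indicator (fun p => v p.1 * w p.2) with hF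
  have hvInt : IntegrableOn v (Set.Ioc a t) := hv.integrableOn_Ioc
  have hFint : Integrable F
      ((volume.restrict (Set.Ioc a t)).prod (volume.restrict (Set.Ioc a t))) :=
    (hvInt.mul_prod hw).indicator hE
  have stepA : ∀ s ∈ Set.Ioc a t,
      v s * ∫ τ in a..s, w τ = ∫ τ in Set.Ioc a t, F (s, τ) := by
    intro s hs
    have h1 : ∀ τ : ℝ, F (s, τ) = (Set.Iic s).indicator (fun τ => v s * w τ) τ := by
      intro τ
      by_cases h : τ ≤ s <;>
        simp [hF, Set.indicator_apply, h, Set.mem_Iic]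
    simp only [h1]
    rw [setIntegral_indicator measurableSet_Iic]
    have h2 : Set.Ioc a t ∩ Set.Iic s = Set.Ioc a s := by
      ext x; simp only [Set.mem_inter_iff, Set.mem_Ioc, Set.mem_Iic]
      constructor
      · rintro ⟨⟨h3, _⟩, h5⟩; exact ⟨h3, h5⟩
      · rintro ⟨h3, h4⟩; exact ⟨⟨h3, h4.trans hs.2⟩, h4⟩
    rw [h2, intervalIntegral.integral_of_le hs.1.le, MeasureTheory.integral_const_mul]
  have stepB : ∀ τ ∈ Set.Ioc a t,
      w τ * ∫ s in τ..t, v s = ∫ s in Set.Ioc a t, F (s, τ) := by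
    intro τ hτ
    have h1 : ∀ s : ℝ, F (s, τ) = (Set.Ici τ).indicator (fun s => v s * w τ) s := by
      intro s
      by_cases h : τ ≤ s <;>
        simp [hF, Set.indicator_apply, h, Set.mem_Ici]
    simp only [h1]
    rw [setIntegral_indicator measurableSet_Ici]
    have h2 : Set.Ioc a t ∩ Set.Ici τ = Set.Icc τ t := by
      ext x; simp only [Set.mem_inter_iff, Set.mem_Ioc, Set.mem_Ici, Set.mem_Icc]
      constructor
      · rintro ⟨⟨_, h4⟩, h5⟩; exact ⟨h5, h4⟩
      · rintro ⟨h3, h4⟩; exact ⟨⟨lt_of_lt_of_le hτ.1 h3, h4⟩, h3⟩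
    rw [h2, MeasureTheory.integral_Icc_eq_integral_Ioc,
      ← intervalIntegral.integral_of_le hτ.2, intervalIntegral.integral_mul_const, mul_comm]
  rw [intervalIntegral.integral_of_le hat, intervalIntegral.integral_of_le hat,
    MeasureTheory.setIntegral_congr_fun measurableSet_Ioc stepA,
    MeasureTheory.setIntegral_congr_fun measurableSet_Ioc stepB]
  exact MeasureTheory.integral_integral_swap hFint

lemma integral_exp_neg_mul (c p q : ℝ) (hc : c ≠ 0) :
    ∫ s in p..q, Real.exp (-(c * s)) = (Real.exp (-(c * p)) - Real.exp (-(c * q))) / c := by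
  have hd : ∀ s : ℝ, HasDerivAt (fun s => -Real.exp (-(c * s)) / c)
      (Real.exp (-(c * s))) s := by
    intro s
    have h1 : HasDerivAt (fun s : ℝ => -(c * s)) (-c) s := by
      have h := ((hasDerivAt_id s).const_mul c).neg
      simp only [id, mul_one] at h
      exact h
    have h2 := (h1.exp).neg.div_const c
    have h3 : -(Real.exp (-(c * s)) * -c) / c = Real.exp (-(c * s)) := by field_simp
    rw [h3] at h2
    exact h2
  rw [intervalIntegral.integral_eq_sub_of_hasDerivAt (fun s _ => hd s)
    ((Real.continuous_exp.comp (by continuity)).intervalIntegrable p q)]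
  ring

theorem stmt5 (a b : ℝ) (hab : a < b) (f f' : ℝ → ℝ)
    (hcont : ContinuousOn f (Set.Icc a b))
    (hder : ∀ s ∈ Set.Ioo a b, HasDerivAt f (f' s) s)
    (hint : IntervalIntegrable f' volume a b)
    (α : ℝ) (hα : α ∈ Set.Ioo (0:ℝ) 1) :
    (∀ t ∈ Set.Icc a b, cfI α a (fun s => cfD α a f' s) t = f t - f a) ∧
    (f a = 0 → ∀ t ∈ Set.Icc a b, cfI α a (fun s => cfD α a f' s) t = f t) := by
  have h1α : (0:ℝ) < 1 - α := by linarith [hα.2]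
  set c : ℝ := α / (1 - α) with hc
  have hcpos : 0 < c := div_pos hα.1 h1α
  have hcne : c ≠ 0 := ne_of_gt hcpos
  have main : ∀ t ∈ Set.Icc a b, cfI α a (fun s => cfD α a f' s) t = f t - f a := by
    intro t ht
    obtain ⟨hat, htb⟩ := ht
    set w : ℝ → ℝ := fun τ => f' τ * Real.exp (c * τ) with hw
    -- integrability of f' and w on subintervals
    have hf'sub : ∀ s ∈ Set.Icc a b, IntervalIntegrable f' volume a s := fun s hs =>
      hint.mono_set (by
        rw [Set.uIcc_of_le hs.1, Set.uIcc_of_le hab.le]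
        exact Set.Icc_subset_Icc le_rfl hs.2)
    have hwsub : ∀ s ∈ Set.Icc a b, IntervalIntegrable w volume a s := fun s hs =>
      (hf'sub s hs).mul_continuousOn (Continuous.continuousOn (by continuity))
    -- rewriting cfD
    have hcfD : ∀ s : ℝ, cfD α a f' s
        = (1 / (1 - α)) * (Real.exp (-(c * s)) * ∫ τ in a..s, w τ) := by
      intro s
      unfold cfD
      congr 1
      rw [← intervalIntegral.integral_const_mul]
      apply intervalIntegral.integral_congr
      intro τ _
      have heq : -(α * (s - τ)) / (1 - α) = -(c * s) + c * τ := by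
        rw [hc]; field_simp; ring
      show f' τ * Real.exp (-(α * (s - τ)) / (1 - α)) = Real.exp (-(c * s)) * w τ
      rw [heq, Real.exp_add]
      simp only [hw]
      ring
    unfold cfI
    simp only [hcfD]
    have key : (α * ∫ s in a..t, (1 / (1 - α)) * (Real.exp (-(c * s)) * ∫ τ in a..s, w τ))
        = ∫ τ in a..t, w τ * (Real.exp (-(c * τ)) - Real.exp (-(c * t))) := by
      rw [intervalIntegral.integral_const_mul, ← mul_assoc]
      have hαc : α * (1 / (1 - α)) = c := by rw [hc]; field_simp
      have hwIoc : IntegrableOn w (Set.Ioc a t) := by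
        have h0 := (hwsub t ⟨hat, htb⟩).def'
        rwa [Set.uIoc_of_le hat] at h0
      have hvcont : Continuous (fun s => Real.exp (-(c * s))) :=
        Real.continuous_exp.comp ((continuous_const.mul continuous_id).neg)
      rw [hαc, fubini_tri a t hat w (fun s => Real.exp (-(c * s))) hwIoc hvcont,
        ← intervalIntegral.integral_const_mul]
      apply intervalIntegral.integral_congr
      intro τ _
      show c * (w τ * ∫ s in τ..t, Real.exp (-(c * s))) = _
      rw [integral_exp_neg_mul c τ t hcne]
      field_simp
    rw [key]
    have h2 : (1 - α) * ((1 / (1 - α)) * (Real.exp (-(c * t)) * ∫ τ in a..t, w τ))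
        = ∫ τ in a..t, w τ * Real.exp (-(c * t)) := by
      rw [← mul_assoc, mul_one_div, div_self (ne_of_gt h1α), one_mul,
        ← intervalIntegral.integral_const_mul]
      apply intervalIntegral.integral_congr
      intro τ _
      show Real.exp (-(c * t)) * w τ = w τ * Real.exp (-(c * t))
      ring
    rw [h2]
    have hwct : IntervalIntegrable (fun τ => w τ * Real.exp (-(c * t))) volume a t :=
      (hwsub t ⟨hat, htb⟩).mul_const _
    have hwdiff : IntervalIntegrable
        (fun τ => w τ * (Real.exp (-(c * τ)) - Real.exp (-(c * t)))) volume a t :=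
      (hwsub t ⟨hat, htb⟩).mul_continuousOn (Continuous.continuousOn (by continuity))
    rw [← intervalIntegral.integral_add hwct hwdiff]
    have h3 : (∫ τ in a..t, (w τ * Real.exp (-(c * t))
        + w τ * (Real.exp (-(c * τ)) - Real.exp (-(c * t))))) = ∫ τ in a..t, f' τ := by
      apply intervalIntegral.integral_congr
      intro τ _
      show w τ * Real.exp (-(c * t)) + w τ * (Real.exp (-(c * τ)) - Real.exp (-(c * t))) = f' τ
      have h4 : w τ * Real.exp (-(c * t)) + w τ * (Real.exp (-(c * τ)) - Real.exp (-(c * t)))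
          = w τ * Real.exp (-(c * τ)) := by ring
      rw [h4]
      simp only [hw]
      rw [mul_assoc, ← Real.exp_add]
      simp
    rw [h3]
    exact intervalIntegral.integral_eq_sub_of_hasDeriv_right_of_le hat
      (hcont.mono (Set.Icc_subset_Icc le_rfl htb))
      (fun x hx => (hder x ⟨hx.1, lt_of_lt_of_le hx.2 htb⟩).hasDerivWithinAt)
      (hf'sub t ⟨hat, htb⟩)
  exact ⟨main, fun hfa t ht => by rw [main t ht, hfa, sub_zero]⟩
end

section
/- For f ∈ W¹(a,b) and α ∈ (0,1), the Caputo–Fabrizio derivative of the Caputo–Fabrizio integral satisfies CF_a D^α (CF_a I^α f)(t) = f(t) − f(a) exp(−α(t−a)/(1−α)) for all t ∈ [a,b]. In particular CF_a D^α ∘ CF_a I^α = id on such f if and only if f(a) = 0. -/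
open MeasureTheory Filter Real Set intervalIntegral

theorem stmt6 (a b : ℝ) (hab : a < b) (f f' : ℝ → ℝ)
    (hcont : ContinuousOn f (Set.Icc a b))
    (hder : ∀ s ∈ Set.Ioo a b, HasDerivAt f (f' s) s)
    (hint : IntervalIntegrable f' volume a b)
    (α : ℝ) (hα : α ∈ Set.Ioo (0:ℝ) 1) :
    (∀ t ∈ Set.Icc a b,
      cfD α a (fun s => (1 - α) * f' s + α * f s) t
        = f t - f a * Real.exp (-(α * (t - a)) / (1 - α))) ∧
    ((∀ t ∈ Set.Icc a b,
        cfD α a (fun s => (1 - α) * f' s + α * f s) t = f t) ↔ f a = 0) := by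
  obtain ⟨hα0, hα1⟩ := hα
  have h1α : (0:ℝ) < 1 - α := by linarith
  have h1α' : (1:ℝ) - α ≠ 0 := ne_of_gt h1α
  have main : ∀ t ∈ Set.Icc a b,
      cfD α a (fun s => (1 - α) * f' s + α * f s) t
        = f t - f a * Real.exp (-(α * (t - a)) / (1 - α)) := by
    intro t ht
    obtain ⟨hat, htb⟩ := ht
    set E : ℝ → ℝ := fun τ => Real.exp (-(α * (t - τ)) / (1 - α)) with hE
    set F : ℝ → ℝ := fun τ => f τ * E τ with hFdef
    have hEcont : Continuous E := by
      apply Real.continuous_exp.comp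
      continuity
    have hder' : ∀ τ ∈ Set.Ioo a t,
        HasDerivAt F (f' τ * E τ + f τ * (α / (1 - α) * E τ)) τ := by
      intro τ hτ
      have hτ' : τ ∈ Set.Ioo a b := ⟨hτ.1, lt_of_lt_of_le hτ.2 htb⟩
      have hG : HasDerivAt (fun τ : ℝ => -(α * (t - τ)) / (1 - α)) (α / (1 - α)) τ := by
        have heq : (fun τ : ℝ => -(α * (t - τ)) / (1 - α))
            = fun τ : ℝ => (α / (1 - α)) * τ - (α * t) / (1 - α) := by
          funext x; field_simp; ring
        rw [heq]
        simpa using ((hasDerivAt_id τ).const_mul (α / (1 - α))).sub_const ((α * t) / (1 - α))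
      have hEder : HasDerivAt E (α / (1 - α) * E τ) τ := by
        simpa [hE, mul_comm] using hG.exp
      exact (hder τ hτ').mul hEder
    have hcont' : ContinuousOn F (Set.Icc a t) :=
      (hcont.mono (Set.Icc_subset_Icc le_rfl htb)).mul hEcont.continuousOn
    have hintE : IntervalIntegrable (fun τ => f' τ * E τ) volume a t := by
      apply IntervalIntegrable.mul_continuousOn _ hEcont.continuousOn
      exact hint.mono_set (by
        rw [Set.uIcc_of_le hat, Set.uIcc_of_le (le_trans hat htb)]
        exact Set.Icc_subset_Icc le_rfl htb)
    have hintf : IntervalIntegrable (fun τ => f τ * (α / (1 - α) * E τ)) volume a t := by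
      apply ContinuousOn.intervalIntegrable
      rw [Set.uIcc_of_le hat]
      exact (hcont.mono (Set.Icc_subset_Icc le_rfl htb)).mul
        (continuousOn_const.mul hEcont.continuousOn)
    have hintF : IntervalIntegrable
        (fun τ => f' τ * E τ + f τ * (α / (1 - α) * E τ)) volume a t :=
      hintE.add hintf
    have hFTC := intervalIntegral.integral_eq_sub_of_hasDerivAt_of_le hat hcont' hder' hintF
    have hcongr : (∫ τ in a..t, ((1 - α) * f' τ + α * f τ) * E τ)
        = (1 - α) * ∫ τ in a..t, (f' τ * E τ + f τ * (α / (1 - α) * E τ)) := by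
      rw [← intervalIntegral.integral_const_mul]
      apply intervalIntegral.integral_congr
      intro x _
      field_simp
    have hFt : F t = f t := by simp [hFdef, hE]
    have hFa : F a = f a * Real.exp (-(α * (t - a)) / (1 - α)) := by simp [hFdef, hE]
    simp only [cfD]
    rw [hcongr, hFTC, hFt, hFa]
    field_simp
  refine ⟨main, ?_, ?_⟩
  · intro h
    have h1 := h a ⟨le_rfl, le_of_lt hab⟩
    have h2 := main a ⟨le_rfl, le_of_lt hab⟩
    rw [h1] at h2
    simp at h2
    linarith [h2]
  · intro hfa t ht
    rw [main t ht, hfa]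
    ring
end

section
/- For α ∈ (0,1), β > 0, and t > a, the Caputo–Fabrizio derivative of the power function satisfies CF_a D^α (t−a)^β = (β/α)(t−a)^{β−1} [1 − Γ(β) E_{1,β}(−α(t−a)/(1−α))], where E_{1,β}(z) = Σ_{k≥0} z^k / Γ(k+β) is the two-parameter Mittag–Leffler function. -/
open MeasureTheory Filter Real Set intervalIntegral

/-- Two-parameter Mittag–Leffler function with first parameter `1`. -/
noncomputable def mittagLeffler1 (β z : ℝ) : ℝ :=
  ∑' k : ℕ, z ^ k / Real.Gamma (k + β)


lemma lemA (m : ℕ) : ∀ β : ℝ, 0 < β →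
    ∑ k ∈ Finset.range (m+1),
        (-1:ℝ)^k / ((Nat.factorial (m-k) : ℝ) * Real.Gamma (k+1+β))
      = 1 / ((Nat.factorial m : ℝ) * (β+m) * Real.Gamma β) := by
  induction m with
  | zero =>
    intro β hβ
    simp only [Finset.range_one, Finset.sum_singleton, pow_zero, Nat.sub_zero,
      Nat.factorial_zero, Nat.cast_zero, Nat.cast_one, one_mul, zero_add, add_zero]
    rw [add_comm, Real.Gamma_add_one hβ.ne']
  | succ m ih =>
    intro β hβ
    rw [Finset.sum_range_succ']
    have h1 : ∀ i ∈ Finset.range (m+1),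
        (-1:ℝ)^(i+1) / ((Nat.factorial (m+1-(i+1)) : ℝ) * Real.Gamma (↑(i+1)+1+β))
        = -((-1:ℝ)^i / ((Nat.factorial (m-i) : ℝ) * Real.Gamma (↑i+1+(β+1)))) := by
      intro i _
      have h : ((i:ℕ):ℝ)+1+1+β = ((i:ℕ):ℝ)+1+(β+1) := by ring
      push_cast
      rw [h, pow_succ]
      ring
    rw [Finset.sum_congr rfl h1, Finset.sum_neg_distrib, ih (β+1) (by linarith)]
    have hΓ : Real.Gamma (β+1) = β * Real.Gamma β := Real.Gamma_add_one hβ.ne'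
    have hΓpos : 0 < Real.Gamma β := Real.Gamma_pos_of_pos hβ
    simp only [Nat.sub_zero, pow_zero, Nat.cast_zero, zero_add]
    rw [add_comm (1:ℝ) β, hΓ, Nat.factorial_succ]
    have hf : (0:ℝ) < (Nat.factorial m : ℝ) := by positivity
    push_cast
    field_simp
    ring


lemma summable_ML_norm (β : ℝ) (hβ : 0 < β) (z : ℝ) :
    Summable fun k : ℕ => ‖z ^ k / Real.Gamma (k + β)‖ := by
  apply summable_of_ratio_norm_eventually_le (r := 1/2) (by norm_num)
  filter_upwards [Filter.eventually_ge_atTop ⌈2*|z|⌉₊] with k hk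
  have hk' : 2*|z| ≤ (k:ℝ) := le_trans (Nat.le_ceil _) (by exact_mod_cast hk)
  have hkβ : (0:ℝ) < (k:ℝ) + β := by positivity
  have hΓ : 0 < Real.Gamma ((k:ℝ) + β) := Real.Gamma_pos_of_pos hkβ
  have hΓ1 : Real.Gamma (((k:ℕ)+1 : ℕ) + β) = ((k:ℝ)+β) * Real.Gamma ((k:ℝ)+β) := by
    push_cast
    rw [show (k:ℝ)+1+β = ((k:ℝ)+β)+1 by ring, Real.Gamma_add_one hkβ.ne']
  rw [norm_norm, norm_norm, hΓ1]
  have h1 : ‖z^(k+1) / (((k:ℝ)+β) * Real.Gamma ((k:ℝ)+β))‖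
      = (|z|/((k:ℝ)+β)) * ‖z^k / Real.Gamma ((k:ℝ)+β)‖ := by
    rw [norm_div, norm_div, norm_mul, pow_succ, norm_mul]
    rw [Real.norm_eq_abs ((k:ℝ)+β), abs_of_pos hkβ]
    field_simp
    simp only [Real.norm_eq_abs]
  rw [h1]
  apply mul_le_mul_of_nonneg_right _ (norm_nonneg _)
  rw [div_le_iff₀ hkβ]
  nlinarith [abs_nonneg z]

lemma summable_exp_norm (z : ℝ) : Summable fun n : ℕ => ‖z ^ n / (Nat.factorial n : ℝ)‖ :=
  (Real.summable_pow_div_factorial |z|).congr fun n => by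
    rw [norm_div, norm_pow, Real.norm_eq_abs, Real.norm_eq_abs,
      Nat.abs_cast]

lemma summable_S3 (β : ℝ) (hβ : 0 < β) (z : ℝ) :
    Summable fun k : ℕ => z ^ (k+1) / ((Nat.factorial k : ℝ) * (β + k)) := by
  apply Summable.of_norm
  refine Summable.of_nonneg_of_le (fun k => norm_nonneg _) ?_
    (((Real.summable_pow_div_factorial |z|).mul_left |z|).mul_right (1/β))
  · intro k
    have hβk : (0:ℝ) < β + k := by positivity
    have hf : (0:ℝ) < (Nat.factorial k : ℝ) := by positivity
    rw [norm_div, norm_pow, Real.norm_eq_abs, Real.norm_eq_abs, abs_mul,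
      Nat.abs_cast, abs_of_pos hβk, pow_succ]
    rw [div_le_iff₀ (by positivity)]
    calc |z| ^ k * |z| = |z|^k * |z| := rfl
      _ ≤ |z|^k * |z| * (β+k) / β := by
          rw [le_div_iff₀ hβ]; nlinarith [mul_nonneg (mul_nonneg (pow_nonneg (abs_nonneg z) k) (abs_nonneg z)) (Nat.cast_nonneg (α := ℝ) k)]
      _ = |z| * (|z| ^ k / ↑(Nat.factorial k)) * (1 / β) * (↑(Nat.factorial k) * (β + ↑k)) := by
          field_simp


lemma lemC (β : ℝ) (hβ : 0 < β) (l x : ℝ) (hx : 0 < x) :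
    (∫ s in (0:ℝ)..x, β * s ^ (β-1) * Real.exp (l*s))
      = ∑' k : ℕ, β * l^k * x^(β+k) / ((Nat.factorial k : ℝ) * (β+k)) := by
  have hexp : ∀ w : ℝ, Real.exp w = ∑' n : ℕ, w ^ n / (Nat.factorial n : ℝ) := by
    intro w; rw [Real.exp_eq_exp_ℝ, NormedSpace.exp_eq_tsum_div]
  set F : ℕ → ℝ → ℝ := fun k s => (β * l^k / (Nat.factorial k : ℝ)) * s ^ (β-1+k) with hF
  -- integral of each term
  have hIntble : ∀ k : ℕ, IntegrableOn (F k) (Ioc 0 x) := by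
    intro k
    have : IntervalIntegrable (fun s : ℝ => s ^ (β-1+(k:ℝ))) volume 0 x :=
      intervalIntegral.intervalIntegrable_rpow' (by push_cast; linarith)
    rw [intervalIntegrable_iff_integrableOn_Ioc_of_le hx.le] at this
    exact this.const_mul _
  have hIval : ∀ k : ℕ, (∫ s in Ioc (0:ℝ) x, s ^ (β-1+(k:ℝ))) = x^(β+k)/(β+k) := by
    intro k
    have hβk : (0:ℝ) < β + k := by positivity
    rw [← intervalIntegral.integral_of_le hx.le,
      integral_rpow (Or.inl (by push_cast; linarith))]
    rw [show β-1+(k:ℝ)+1 = β+k by ring, Real.zero_rpow hβk.ne', sub_zero]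
  have hval : ∀ k : ℕ, (∫ s in Ioc (0:ℝ) x, F k s)
      = β * l^k * x^(β+k) / ((Nat.factorial k : ℝ) * (β+k)) := by
    intro k
    rw [hF]
    simp only []
    rw [MeasureTheory.integral_const_mul _ _, hIval k]
    have hβk : (0:ℝ) < β + k := by positivity
    have hfk : (0:ℝ) < (Nat.factorial k : ℝ) := by positivity
    field_simp
  -- norm integrals summable
  have hnorm : ∀ k : ℕ, (∫ s in Ioc (0:ℝ) x, ‖F k s‖)
      = (β * |l|^k / (Nat.factorial k : ℝ)) * (x^(β+k)/(β+k)) := by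
    intro k
    have : EqOn (fun s => ‖F k s‖)
        (fun s => (β * |l|^k / (Nat.factorial k : ℝ)) * s ^ (β-1+(k:ℝ))) (Ioc 0 x) := by
      intro s hs
      simp only [hF, norm_mul, Real.norm_eq_abs]
      rw [abs_of_nonneg (Real.rpow_nonneg hs.1.le _), abs_div, abs_mul, abs_of_pos hβ,
        abs_pow, Nat.abs_cast]
    rw [MeasureTheory.setIntegral_congr_fun measurableSet_Ioc this,
      MeasureTheory.integral_const_mul _ _, hIval k]
  have hsum : Summable fun k : ℕ => ∫ s in Ioc (0:ℝ) x, ‖F k s‖ := by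
    refine Summable.of_nonneg_of_le
      (fun k => by rw [hnorm k]; positivity) ?_
      ((Real.summable_pow_div_factorial (abs l * x)).mul_left (x^β))
    intro k
    rw [hnorm k]
    have hβk : (0:ℝ) < β + k := by positivity
    have hfk : (0:ℝ) < (Nat.factorial k : ℝ) := by positivity
    have hxb : x^(β+(k:ℝ)) = x^β * x^(k:ℕ) := by
      rw [Real.rpow_add hx, Real.rpow_natCast]
    rw [hxb, mul_pow]
    have heq : β * |l| ^ k / (Nat.factorial k : ℝ) * (x ^ β * x ^ k / (β + (k:ℝ)))
        = (x ^ β * (|l| ^ k * x ^ k / (Nat.factorial k : ℝ))) * (β / (β + (k:ℝ))) := by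
      field_simp
    rw [heq]
    have h2 : β / (β + (k:ℝ)) ≤ 1 := by
      rw [div_le_one hβk]; linarith [Nat.cast_nonneg (α := ℝ) k]
    exact mul_le_of_le_one_right (by positivity) h2
  -- pointwise equality on Ioc
  have hpt : EqOn (fun s : ℝ => β * s ^ (β-1) * Real.exp (l*s)) (fun s => ∑' k, F k s) (Ioc 0 x) := by
    intro s hs
    have hs0 : 0 < s := hs.1
    simp only [hF]
    rw [hexp (l*s), ← tsum_mul_left]
    apply tsum_congr
    intro k
    rw [mul_pow, show s^(β-1+(k:ℝ)) = s^(β-1) * s^(k:ℕ) by rw [Real.rpow_add hs0, Real.rpow_natCast]]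
    field_simp
  rw [intervalIntegral.integral_of_le hx.le,
    MeasureTheory.setIntegral_congr_fun measurableSet_Ioc hpt,
    ← MeasureTheory.integral_tsum_of_summable_integral_norm hIntble hsum]
  exact tsum_congr hval


lemma lemD (β : ℝ) (hβ : 0 < β) (z : ℝ) :
    1 - Real.Gamma β * mittagLeffler1 β (-z)
      = Real.exp (-z) * ∑' k : ℕ, z ^ (k+1) / ((Nat.factorial k : ℝ) * (β + k)) := by
  have hΓpos : 0 < Real.Gamma β := Real.Gamma_pos_of_pos hβ
  have hexp : ∀ w : ℝ, Real.exp w = ∑' n : ℕ, w ^ n / (Nat.factorial n : ℝ) := by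
    intro w
    rw [Real.exp_eq_exp_ℝ, NormedSpace.exp_eq_tsum_div]
  set c : ℕ → ℝ := fun n => ∑ k ∈ Finset.range (n+1),
      (-z) ^ k / Real.Gamma (k + β) * (z ^ (n-k) / (Nat.factorial (n-k) : ℝ)) with hc
  have sexp : Summable fun n : ℕ => z ^ n / (Nat.factorial n : ℝ) :=
    (summable_exp_norm z).of_norm
  have sc : Summable c :=
    (summable_norm_sum_mul_range_of_summable_norm
      (summable_ML_norm β hβ (-z)) (summable_exp_norm z)).of_norm
  have cauchy : mittagLeffler1 β (-z) * Real.exp z = ∑' n, c n := by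
    rw [mittagLeffler1, hexp z]
    exact tsum_mul_tsum_eq_tsum_sum_range_of_summable_norm
      (summable_ML_norm β hβ (-z)) (summable_exp_norm z)
  -- values of c
  have hc0 : c 0 = 1 / Real.Gamma β := by
    simp [hc]
  have hcs : ∀ m : ℕ, c (m+1)
      = z^(m+1) * (1/(Real.Gamma β * (Nat.factorial (m+1) : ℝ))
          - 1/((Nat.factorial m : ℝ) * (β+m) * Real.Gamma β)) := by
    intro m
    have h1 : ∀ k ∈ Finset.range (m+2),
        (-z) ^ k / Real.Gamma (k + β) * (z ^ (m+1-k) / (Nat.factorial (m+1-k) : ℝ))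
        = z^(m+1) * ((-1:ℝ)^k / ((Nat.factorial (m+1-k) : ℝ) * Real.Gamma (k + β))) := by
      intro k hk
      have hk' : k ≤ m+1 := Nat.lt_succ_iff.mp (Finset.mem_range.mp hk)
      have hz : z^k * z^(m+1-k) = z^(m+1) := by rw [← pow_add, Nat.add_sub_cancel' hk']
      rw [neg_pow]
      rw [show (-1:ℝ)^k * z^k / Real.Gamma (k+β) * (z^(m+1-k) / (Nat.factorial (m+1-k) : ℝ))
          = (z^k * z^(m+1-k)) * ((-1:ℝ)^k / ((Nat.factorial (m+1-k) : ℝ) * Real.Gamma (k + β)))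
        from by ring, hz]
    rw [hc]
    simp only []
    rw [Finset.sum_congr rfl h1, ← Finset.mul_sum, Finset.sum_range_succ']
    congr 1
    have h2 : ∀ i ∈ Finset.range (m+1),
        (-1:ℝ)^(i+1) / ((Nat.factorial (m+1-(i+1)) : ℝ) * Real.Gamma (↑(i+1) + β))
        = -((-1:ℝ)^i / ((Nat.factorial (m-i) : ℝ) * Real.Gamma (↑i+1+β))) := by
      intro i _
      have h : ((i:ℝ)+1) + β = (i:ℝ)+1+β := by ring
      push_cast
      rw [h, pow_succ]
      ring
    rw [Finset.sum_congr rfl h2, Finset.sum_neg_distrib, lemA m β hβ]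
    simp only [pow_zero, Nat.sub_zero, Nat.cast_zero, zero_add]
    ring
  -- main computation
  have key : Real.exp z * (1 - Real.Gamma β * mittagLeffler1 β (-z))
      = ∑' k : ℕ, z ^ (k+1) / ((Nat.factorial k : ℝ) * (β + k)) := by
    have expand : Real.exp z * (1 - Real.Gamma β * mittagLeffler1 β (-z))
        = Real.exp z - Real.Gamma β * (mittagLeffler1 β (-z) * Real.exp z) := by ring
    rw [expand, cauchy, hexp z, ← tsum_mul_left, ← Summable.tsum_sub sexp (sc.mul_left _)]
    have hsummable : Summable (fun n : ℕ => z ^ n / (Nat.factorial n : ℝ) - Real.Gamma β * c n) :=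
      sexp.sub (sc.mul_left _)
    rw [Summable.tsum_eq_zero_add hsummable]
    have hzero : z ^ 0 / (Nat.factorial 0 : ℝ) - Real.Gamma β * c 0 = 0 := by
      rw [hc0]
      field_simp
      simp
    rw [hzero, zero_add]
    apply tsum_congr
    intro m
    rw [hcs m]
    have hβm : (0:ℝ) < β + m := by positivity
    have hf : (0:ℝ) < (Nat.factorial m : ℝ) := by positivity
    have hf1 : (0:ℝ) < (Nat.factorial (m+1) : ℝ) := by positivity
    rw [Nat.factorial_succ]
    push_cast
    field_simp
    ring
  -- conclude
  have hene : Real.exp z ≠ 0 := (Real.exp_pos z).ne'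
  have := key
  rw [← this, ← mul_assoc, ← Real.exp_add, neg_add_cancel, Real.exp_zero, one_mul]


theorem stmt7 (α a β t : ℝ) (hα : α ∈ Set.Ioo (0:ℝ) 1) (hβ : 0 < β) (ht : a < t) :
    cfD α a (fun τ => β * (τ - a) ^ (β - 1)) t
      = (β / α) * (t - a) ^ (β - 1)
        * (1 - Real.Gamma β * mittagLeffler1 β (-(α * (t - a)) / (1 - α))) := by
  obtain ⟨hα0, hα1⟩ := hα
  have h1α : 0 < 1 - α := by linarith
  have hx : 0 < t - a := sub_pos.mpr ht
  set l : ℝ := α / (1-α) with hl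
  have hlpos : 0 < l := div_pos hα0 h1α
  have hz : -(α * (t-a)) / (1-α) = -(l*(t-a)) := by
    rw [hl, div_mul_eq_mul_div, neg_div]
  have hexpo : ∀ τ : ℝ, -(α*(t-τ))/(1-α) = (-(l*(t-a))) + l*(τ-a) := by
    intro τ
    rw [hl]
    field_simp
    ring
  rw [cfD]
  have hinteg : ∀ τ : ℝ, (β * (τ-a)^(β-1)) * Real.exp (-(α*(t-τ))/(1-α))
      = Real.exp (-(l*(t-a))) * (β * (τ-a)^(β-1) * Real.exp (l*(τ-a))) := by
    intro τ
    rw [hexpo τ, Real.exp_add]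
    ring
  simp only [hinteg]
  rw [intervalIntegral.integral_const_mul]
  have hsub : (∫ τ in a..t, β * (τ-a)^(β-1) * Real.exp (l*(τ-a)))
      = ∫ s in (0:ℝ)..(t-a), β * s^(β-1) * Real.exp (l*s) := by
    have h := intervalIntegral.integral_comp_sub_right
      (a := a) (b := t) (fun s => β * s^(β-1) * Real.exp (l*s)) a
    rw [sub_self] at h
    exact h
  rw [hsub, lemC β hβ l (t-a) hx, hz, lemD β hβ (l*(t-a))]
  rw [← tsum_mul_left, ← tsum_mul_left, ← tsum_mul_left, ← tsum_mul_left]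
  apply tsum_congr
  intro k
  have hxbk : (t-a)^(β+(k:ℝ)) = (t-a)^(β-1) * (t-a)^(k+1 : ℕ) := by
    rw [show β+(k:ℝ) = (β-1)+((k:ℝ)+1) by ring, Real.rpow_add hx,
      ← Real.rpow_natCast (t-a) (k+1)]
    push_cast
    ring_nf
  have hβk : (0:ℝ) < β + k := by positivity
  have hfk : (0:ℝ) < (Nat.factorial k : ℝ) := by positivity
  rw [hxbk, mul_pow, hl]
  have hαne : α ≠ 0 := hα0.ne'
  have h1αne : (1-α) ≠ 0 := h1α.ne'
  field_simp
  linear_combination (-(α * α ^ k * (1 - α)⁻¹ ^ k)) * mul_inv_cancel₀ h1αne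
end

section
/- For β > 0, the Mittag–Leffler function E_{1,β}(−x) tends to 0 as x → +∞. Consequently, for t > a and β > 0, lim_{α→1⁻} (β/α)(t−a)^{β−1}[1 − Γ(β) E_{1,β}(−α(t−a)/(1−α))] = β(t−a)^{β−1}; i.e., CF_a D^α (t−a)^β converges to the classical derivative β(t−a)^{β−1} as α → 1⁻. -/
open MeasureTheory Filter Real Set

lemma summable_ml (β : ℝ) (hβ : 0 < β) (z : ℝ) :
    Summable (fun k : ℕ => z ^ k / Real.Gamma (k + β)) := by
  apply summable_of_ratio_norm_eventually_le (r := 1/2) (by norm_num)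
  filter_upwards [eventually_ge_atTop (Nat.ceil (2 * |z|))] with k hk
  have hkβ : (0:ℝ) < k + β := by positivity
  have hG : 0 < Real.Gamma (k + β) := Real.Gamma_pos_of_pos hkβ
  have hG' : Real.Gamma ((k:ℝ) + 1 + β) = (k + β) * Real.Gamma (k + β) := by
    rw [show (k:ℝ) + 1 + β = ((k:ℝ) + β) + 1 by ring, Real.Gamma_add_one hkβ.ne']
  have h2z : 2 * |z| ≤ k + β := by
    calc 2 * |z| ≤ (Nat.ceil (2 * |z|) : ℝ) := Nat.le_ceil _
      _ ≤ (k : ℝ) := by exact_mod_cast hk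
      _ ≤ k + β := by linarith
  have hcast : ((k+1 : ℕ) : ℝ) + β = (k:ℝ) + 1 + β := by push_cast; ring
  simp only [norm_div, Real.norm_eq_abs, abs_pow]
  rw [hcast, hG', abs_of_pos hG, abs_of_pos (by positivity : (0:ℝ) < ((k:ℝ)+β) * Real.Gamma (k+β))]
  rw [pow_succ, div_le_iff₀ (by positivity)]
  have : |z| ^ k * |z| * 2 ≤ |z| ^ k * ((k:ℝ) + β) := by
    rw [mul_assoc]
    apply mul_le_mul_of_nonneg_left (by linarith) (by positivity)
  have heq : 1 / 2 * (|z| ^ k / Gamma (↑k + β)) * ((↑k + β) * Gamma (↑k + β))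
      = |z| ^ k * ((k:ℝ)+β) / 2 := by field_simp
  rw [heq]; linarith

noncomputable def mlA (β : ℝ) (n : ℕ) : ℝ :=
  ∑ k ∈ Finset.range (n+1), (-1:ℝ)^k / (Real.Gamma (k + β) * (Nat.factorial (n-k)))

lemma mlA_zero (β : ℝ) : mlA β 0 = 1 / Real.Gamma β := by
  simp [mlA, Nat.factorial]

lemma mlA_rec (β : ℝ) (n : ℕ) :
    mlA β (n+1) = 1 / (Real.Gamma β * Nat.factorial (n+1)) - mlA (β+1) n := by
  rw [mlA, Finset.sum_range_succ']
  have h0 : (-1:ℝ)^0 / (Real.Gamma ((0:ℕ) + β) * (Nat.factorial (n+1-0) : ℕ))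
      = 1 / (Real.Gamma β * Nat.factorial (n+1)) := by
    norm_num
  rw [h0]
  have : ∀ k ∈ Finset.range (n+1),
      (-1:ℝ)^(k+1) / (Real.Gamma ((k+1 : ℕ) + β) * (Nat.factorial (n+1-(k+1)) : ℕ))
      = -((-1:ℝ)^k / (Real.Gamma ((k:ℝ) + (β+1)) * (Nat.factorial (n-k) : ℕ))) := by
    intro k _
    have hc : ((k+1:ℕ):ℝ) + β = (k:ℝ) + (β+1) := by push_cast; ring
    rw [hc, Nat.succ_sub_succ, pow_succ]
    ring
  rw [Finset.sum_congr rfl this, Finset.sum_neg_distrib]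
  unfold mlA
  ring

lemma mlA_mul (n : ℕ) : ∀ β : ℝ, 0 < β →
    mlA β n * (Real.Gamma β * Nat.factorial n * (n + β - 1)) = β - 1 := by
  induction n with
  | zero =>
      intro β hβ
      have hG := Real.Gamma_pos_of_pos hβ
      rw [mlA_zero]
      field_simp
      simp
  | succ n ih =>
      intro β hβ
      have hG := Real.Gamma_pos_of_pos hβ
      have hnβ : (0:ℝ) < (n:ℝ) + β := by positivity
      have hA1 : mlA (β+1) n = 1 / (Real.Gamma β * Nat.factorial n * ((n:ℝ) + β)) := by
        have h := ih (β+1) (by linarith)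
        have hΓ : Real.Gamma (β+1) = β * Real.Gamma β := Real.Gamma_add_one hβ.ne'
        rw [hΓ] at h
        have hfac : (0:ℝ) < (Nat.factorial n : ℝ) := by positivity
        have : ((n:ℝ) + (β+1) - 1) = (n:ℝ) + β := by ring
        rw [this] at h
        field_simp at h ⊢
        nlinarith [h]
      rw [mlA_rec, hA1]
      have hfac : ((Nat.factorial (n+1) : ℕ) : ℝ) = ((n:ℝ)+1) * Nat.factorial n := by
        rw [Nat.factorial_succ]; push_cast; ring
      rw [hfac]
      have hfac' : (0:ℝ) < (Nat.factorial n : ℝ) := by positivity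
      have : ((n+1:ℕ):ℝ) + β - 1 = (n:ℝ) + β := by push_cast; ring
      rw [this]
      field_simp
      ring

noncomputable def mlT (β x : ℝ) : ℝ :=
  ∑' n : ℕ, x ^ (n+1) / (Nat.factorial (n+1) * ((n:ℝ) + β))

lemma mlA_succ (β : ℝ) (hβ : 0 < β) (n : ℕ) :
    mlA β (n+1) = (β-1) / (Real.Gamma β * Nat.factorial (n+1) * ((n:ℝ) + β)) := by
  have h := mlA_mul (n+1) β hβ
  have hc : ((n+1:ℕ):ℝ) + β - 1 = (n:ℝ) + β := by push_cast; ring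
  rw [hc] at h
  have hG := Real.Gamma_pos_of_pos hβ
  have h1 : (0:ℝ) < (Nat.factorial (n+1) : ℝ) := by positivity
  have h2 : (0:ℝ) < (n:ℝ) + β := by positivity
  field_simp at h ⊢
  linarith [h]

lemma exp_tsum (x : ℝ) : Real.exp x = ∑' n : ℕ, x ^ n / Nat.factorial n := by
  rw [Real.exp_eq_exp_ℝ, NormedSpace.exp_eq_tsum_div]

lemma summable_mlT (β : ℝ) (hβ : 0 < β) (x : ℝ) :
    Summable (fun n : ℕ => x ^ (n+1) / (Nat.factorial (n+1) * ((n:ℝ) + β))) := by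
  apply Summable.of_norm_bounded (g := fun n : ℕ => (1/β) * (|x| ^ (n+1) / Nat.factorial (n+1)))
  · exact (((summable_nat_add_iff 1).mpr (Real.summable_pow_div_factorial |x|)).mul_left _)
  · intro n
    have h1 : (0:ℝ) < (Nat.factorial (n+1) : ℝ) := by positivity
    have h2 : (0:ℝ) < (n:ℝ) + β := by positivity
    rw [norm_div, Real.norm_eq_abs, Real.norm_eq_abs, abs_pow,
      abs_of_pos (by positivity : (0:ℝ) < (Nat.factorial (n+1) : ℝ) * ((n:ℝ)+β))]
    rw [div_le_iff₀ (by positivity)]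
    have hβn : β ≤ (n:ℝ) + β := by linarith [Nat.cast_nonneg (α := ℝ) n]
    have : |x| ^ (n+1) * β ≤ |x| ^ (n+1) * ((n:ℝ) + β) :=
      mul_le_mul_of_nonneg_left hβn (by positivity)
    calc |x| ^ (n+1) = (1/β) * (|x|^(n+1) * β) / 1 := by field_simp
      _ ≤ 1/β * (|x| ^ (n+1) / ↑(Nat.factorial (n+1))) * (↑(Nat.factorial (n+1)) * (↑n + β)) := by
          rw [div_one]
          have := mul_le_mul_of_nonneg_left this (le_of_lt (by positivity : (0:ℝ) < 1/β))
          calc (1/β) * (|x|^(n+1) * β) ≤ (1/β) * (|x|^(n+1) * ((n:ℝ)+β)) := this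
            _ = 1/β * (|x| ^ (n+1) / ↑(Nat.factorial (n+1))) * (↑(Nat.factorial (n+1)) * (↑n + β)) := by
                field_simp

lemma ml_hf_norm (β : ℝ) (hβ : 0 < β) (x : ℝ) :
    Summable (fun k : ℕ => ‖(-x) ^ k / Real.Gamma (k + β)‖) := by
  apply (summable_ml β hβ |x|).congr
  intro k
  have hG := Real.Gamma_pos_of_pos (by positivity : (0:ℝ) < (k:ℝ) + β)
  rw [norm_div, Real.norm_eq_abs, Real.norm_eq_abs, abs_pow, abs_neg, abs_of_pos hG]

lemma ml_hg_norm (x : ℝ) :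
    Summable (fun m : ℕ => ‖x ^ m / (Nat.factorial m : ℝ)‖) := by
  apply (Real.summable_pow_div_factorial |x|).congr
  intro m
  have : (0:ℝ) < (Nat.factorial m : ℝ) := by positivity
  rw [norm_div, Real.norm_eq_abs, Real.norm_eq_abs, abs_pow, abs_of_pos this]

lemma ml_antidiag (β x : ℝ) (n : ℕ) :
    ∑ kl ∈ Finset.HasAntidiagonal.antidiagonal n, ((-x) ^ kl.1 / Real.Gamma (kl.1 + β)) * (x ^ kl.2 / (Nat.factorial kl.2 : ℝ))
      = x ^ n * mlA β n := by
  rw [Finset.Nat.sum_antidiagonal_eq_sum_range_succ_mk, mlA, Finset.mul_sum]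
  apply Finset.sum_congr rfl
  intro k hk
  have hkn : k ≤ n := Nat.lt_succ_iff.mp (Finset.mem_range.mp hk)
  have hx : x ^ k * x ^ (n - k) = x ^ n := by
    rw [← pow_add, Nat.add_sub_cancel' hkn]
  have : (-x) ^ k = (-1:ℝ)^k * x ^ k := by rw [neg_pow]
  rw [this]
  field_simp
  rw [← hx]

lemma ml_product (β : ℝ) (hβ : 0 < β) (x : ℝ) :
    mittagLeffler1 β (-x) * Real.exp x = ∑' n : ℕ, x ^ n * mlA β n := by
  rw [mittagLeffler1, exp_tsum,
    tsum_mul_tsum_eq_tsum_sum_antidiagonal_of_summable_norm (ml_hf_norm β hβ x) (ml_hg_norm x)]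
  exact tsum_congr (ml_antidiag β x)

lemma ml_summable_prod (β : ℝ) (hβ : 0 < β) (x : ℝ) :
    Summable (fun n : ℕ => x ^ n * mlA β n) := by
  apply ((summable_norm_sum_mul_antidiagonal_of_summable_norm (ml_hf_norm β hβ x) (ml_hg_norm x)).of_norm).congr
  exact ml_antidiag β x

lemma ml_eq (β : ℝ) (hβ : 0 < β) (x : ℝ) :
    mittagLeffler1 β (-x)
      = Real.exp (-x) * (1 / Real.Gamma β) + ((β-1) / Real.Gamma β) * (Real.exp (-x) * mlT β x) := by
  have hprod := ml_product β hβ x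
  have hS := ml_summable_prod β hβ x
  rw [Summable.tsum_eq_zero_add hS] at hprod
  have h0 : x ^ 0 * mlA β 0 = 1 / Real.Gamma β := by rw [mlA_zero]; ring
  have htail : ∑' n : ℕ, x ^ (n+1) * mlA β (n+1)
      = ((β-1)/Real.Gamma β) * mlT β x := by
    rw [mlT, ← tsum_mul_left]
    apply tsum_congr
    intro n
    rw [mlA_succ β hβ n]
    have hG := (Real.Gamma_pos_of_pos hβ).ne'
    field_simp
  rw [h0, htail] at hprod
  have hexp : Real.exp x ≠ 0 := (Real.exp_pos x).ne'
  have : mittagLeffler1 β (-x) = (1 / Real.Gamma β + (β-1)/Real.Gamma β * mlT β x) / Real.exp x := by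
    rw [eq_div_iff hexp]
    exact hprod
  rw [this, Real.exp_neg]
  field_simp

set_option maxHeartbeats 1000000 in
lemma tendsto_exp_mlT (β : ℝ) (hβ : 0 < β) :
    Filter.Tendsto (fun x : ℝ => Real.exp (-x) * mlT β x) atTop (nhds 0) := by
  rw [NormedAddCommGroup.tendsto_nhds_zero]
  intro ε hε
  obtain ⟨N, hN⟩ := exists_nat_gt (2/ε)
  have hNβpos : (0:ℝ) < (N:ℝ) + β := by positivity
  have h2 : 2 < ((N:ℝ) + β) * ε := by
    have : 2/ε < (N:ℝ) + β := by linarith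
    exact (div_lt_iff₀ hε).mp this
  have hNβ : 1/((N:ℝ)+β) < ε/2 := by
    rw [div_lt_div_iff₀ hNβpos two_pos]
    linarith
  have h := tendsto_finset_sum (Finset.range N)
    (fun n _ => ((tendsto_pow_mul_exp_neg_atTop_nhds_zero (n+1)).div_const
      ((Nat.factorial (n+1) : ℝ) * ((n:ℝ)+β))))
  simp only [zero_div, Finset.sum_const_zero] at h
  have hpoly : Filter.Tendsto
      (fun x : ℝ => Real.exp (-x) * ∑ n ∈ Finset.range N,
        x^(n+1)/((Nat.factorial (n+1) : ℝ)*((n:ℝ)+β))) atTop (nhds 0) := by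
    apply h.congr
    intro x
    rw [Finset.mul_sum]
    exact Finset.sum_congr rfl fun n _ => by ring
  filter_upwards [hpoly.eventually_lt_const (show (0:ℝ) < ε/2 by linarith),
    eventually_ge_atTop (0:ℝ)] with x hx hx0
  set t : ℕ → ℝ := fun n => x^(n+1)/((Nat.factorial (n+1):ℝ)*((n:ℝ)+β)) with ht_def
  have ht : Summable t := summable_mlT β hβ x
  have htnn : ∀ n, 0 ≤ t n := by
    intro n
    have : (0:ℝ) < (Nat.factorial (n+1) : ℝ) * ((n:ℝ)+β) := by positivity
    exact div_nonneg (by positivity) this.le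
  have hmlT0 : 0 ≤ mlT β x := tsum_nonneg htnn
  have hnorm : ‖Real.exp (-x) * mlT β x‖ = Real.exp (-x) * mlT β x :=
    abs_of_nonneg (mul_nonneg (Real.exp_pos _).le hmlT0)
  have hsplit : mlT β x = (∑ n ∈ Finset.range N, t n) + ∑' n : ℕ, t (n+N) :=
    (ht.sum_add_tsum_nat_add N).symm
  have hbig : Summable (fun n : ℕ => x ^ (n+(N+1)) / (Nat.factorial (n+(N+1)) : ℝ)) :=
    (summable_nat_add_iff (N+1)).mpr (Real.summable_pow_div_factorial x)
  have htail_le : (∑' n : ℕ, t (n+N)) ≤ (1/((N:ℝ)+β)) * Real.exp x := by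
    have hterm : ∀ n : ℕ, t (n+N)
        ≤ (1/((N:ℝ)+β)) * (x ^ (n+(N+1)) / (Nat.factorial (n+(N+1)) : ℝ)) := by
      intro n
      have e1 : t (n+N) = x^(n+N+1)/((Nat.factorial (n+N+1):ℝ)*(((n:ℝ)+(N:ℝ))+β)) := by
        rw [ht_def]
        push_cast
        ring_nf
      rw [e1]
      have hF : (0:ℝ) < (Nat.factorial (n+N+1) : ℝ) := by positivity
      have hden : (0:ℝ) < ((n:ℝ)+(N:ℝ))+β := by positivity
      have hle : (Nat.factorial (n+N+1):ℝ) * ((N:ℝ)+β)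
          ≤ (Nat.factorial (n+N+1):ℝ) * (((n:ℝ)+(N:ℝ))+β) := by
        apply mul_le_mul_of_nonneg_left _ hF.le
        have : (0:ℝ) ≤ (n:ℝ) := Nat.cast_nonneg n
        linarith
      have hd := div_le_div_of_nonneg_left (by positivity : (0:ℝ) ≤ x^(n+N+1))
        (by positivity : (0:ℝ) < (Nat.factorial (n+N+1):ℝ) * ((N:ℝ)+β)) hle
      calc x^(n+N+1)/((Nat.factorial (n+N+1):ℝ)*(((n:ℝ)+(N:ℝ))+β))
          ≤ x^(n+N+1)/((Nat.factorial (n+N+1):ℝ)*((N:ℝ)+β)) := hd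
        _ = 1/((N:ℝ)+β) * (x ^ (n+(N+1)) / (Nat.factorial (n+(N+1)) : ℝ)) := by
            field_simp
            ring
    have h1 : Summable (fun n => t (n + N)) := (summable_nat_add_iff N).mpr ht
    have h2 := hbig.mul_left (1/((N:ℝ)+β))
    have step1 : (∑' n : ℕ, t (n+N))
        ≤ ∑' n : ℕ, (1/((N:ℝ)+β)) * (x ^ (n+(N+1)) / (Nat.factorial (n+(N+1)) : ℝ)) :=
      Summable.tsum_le_tsum hterm h1 h2
    have step3 : (∑' n : ℕ, x ^ (n+(N+1)) / (Nat.factorial (n+(N+1)) : ℝ)) ≤ Real.exp x := by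
      have hexp := (Real.summable_pow_div_factorial x).sum_add_tsum_nat_add (N+1)
      rw [← exp_tsum] at hexp
      have hhead : 0 ≤ ∑ i ∈ Finset.range (N+1), x ^ i / (Nat.factorial i : ℝ) := by
        apply Finset.sum_nonneg
        intro i _
        positivity
      linarith
    calc (∑' n : ℕ, t (n+N))
        ≤ ∑' n : ℕ, (1/((N:ℝ)+β)) * (x ^ (n+(N+1)) / (Nat.factorial (n+(N+1)) : ℝ)) := step1
      _ = (1/((N:ℝ)+β)) * ∑' n : ℕ, x ^ (n+(N+1)) / (Nat.factorial (n+(N+1)) : ℝ) :=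
          tsum_mul_left
      _ ≤ (1/((N:ℝ)+β)) * Real.exp x := by
          apply mul_le_mul_of_nonneg_left step3 (by positivity)
  rw [hnorm, hsplit, mul_add]
  have hfinal : Real.exp (-x) * (∑' n : ℕ, t (n+N)) ≤ 1/((N:ℝ)+β) := by
    calc Real.exp (-x) * (∑' n : ℕ, t (n+N))
        ≤ Real.exp (-x) * ((1/((N:ℝ)+β)) * Real.exp x) :=
          mul_le_mul_of_nonneg_left htail_le (Real.exp_pos _).le
      _ = 1/((N:ℝ)+β) := by
          rw [Real.exp_neg]
          field_simp
  have : Real.exp (-x) * (∑ n ∈ Finset.range N, t n) < ε/2 := hx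
  linarith

lemma ml_tendsto (β : ℝ) (hβ : 0 < β) :
    Filter.Tendsto (fun x : ℝ => mittagLeffler1 β (-x)) Filter.atTop (nhds 0) := by
  have h1 : Filter.Tendsto (fun x : ℝ => Real.exp (-x) * (1/Real.Gamma β)) atTop (nhds 0) := by
    simpa using (Real.tendsto_exp_neg_atTop_nhds_zero.mul_const (1/Real.Gamma β))
  have h2 : Filter.Tendsto (fun x : ℝ => ((β-1)/Real.Gamma β) * (Real.exp (-x) * mlT β x))
      atTop (nhds 0) := by
    simpa using (tendsto_exp_mlT β hβ).const_mul ((β-1)/Real.Gamma β)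
  have h := h1.add h2
  rw [add_zero] at h
  exact h.congr fun x => (ml_eq β hβ x).symm

theorem stmt10 (β : ℝ) (hβ : 0 < β) (a t : ℝ) (ht : a < t) :
    Filter.Tendsto (fun x : ℝ => mittagLeffler1 β (-x)) Filter.atTop (nhds 0) ∧
    Filter.Tendsto
      (fun α : ℝ => (β / α) * (t - a) ^ (β - 1)
        * (1 - Real.Gamma β * mittagLeffler1 β (-(α * (t - a)) / (1 - α))))
      (nhdsWithin 1 (Set.Iio (1:ℝ))) (nhds (β * (t - a) ^ (β - 1))) := by
  refine ⟨ml_tendsto β hβ, ?_⟩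
  have hta : (0:ℝ) < t - a := by linarith
  -- 1 - α tends to 0 from the right
  have hsub : Filter.Tendsto (fun α : ℝ => 1 - α) (nhdsWithin 1 (Set.Iio 1)) (nhdsWithin 0 (Set.Ioi 0)) := by
    apply tendsto_nhdsWithin_of_tendsto_nhds_of_eventually_within
    · have : Filter.Tendsto (fun α : ℝ => 1 - α) (nhds 1) (nhds 0) := by
        have h' := ((continuous_sub_left (1:ℝ))).tendsto (1:ℝ)
        simpa using h'
      exact this.mono_left nhdsWithin_le_nhds
    · filter_upwards [self_mem_nhdsWithin] with α hα
      simp only [Set.mem_Iio] at hα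
      exact Set.mem_Ioi.mpr (by linarith)
  have hinv : Filter.Tendsto (fun α : ℝ => (1 - α)⁻¹) (nhdsWithin 1 (Set.Iio 1)) atTop :=
    tendsto_inv_nhdsGT_zero.comp hsub
  have hnum : Filter.Tendsto (fun α : ℝ => α * (t - a)) (nhdsWithin 1 (Set.Iio 1)) (nhds (t - a)) := by
    have : Filter.Tendsto (fun α : ℝ => α * (t - a)) (nhds 1) (nhds (1 * (t - a))) :=
      (continuous_id.mul continuous_const).tendsto 1
    rw [one_mul] at this
    exact this.mono_left nhdsWithin_le_nhds
  have harg : Filter.Tendsto (fun α : ℝ => α * (t - a) / (1 - α)) (nhdsWithin 1 (Set.Iio 1)) atTop := by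
    have := Filter.Tendsto.pos_mul_atTop hta hnum hinv
    exact this.congr fun α => by rw [div_eq_mul_inv]
  have hE : Filter.Tendsto (fun α : ℝ => mittagLeffler1 β (-(α * (t - a)) / (1 - α)))
      (nhdsWithin 1 (Set.Iio 1)) (nhds 0) := by
    have := (ml_tendsto β hβ).comp harg
    apply this.congr
    intro α
    simp only [Function.comp_apply, neg_div]
  have hdiv : Filter.Tendsto (fun α : ℝ => β / α) (nhdsWithin 1 (Set.Iio 1)) (nhds β) := by
    have : Filter.Tendsto (fun α : ℝ => β / α) (nhds 1) (nhds (β / 1)) :=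
      (continuousAt_const.div continuousAt_id one_ne_zero)
    rw [div_one] at this
    exact this.mono_left nhdsWithin_le_nhds
  have hfac : Filter.Tendsto (fun α : ℝ => 1 - Real.Gamma β * mittagLeffler1 β (-(α * (t - a)) / (1 - α)))
      (nhdsWithin 1 (Set.Iio 1)) (nhds 1) := by
    have := (hE.const_mul (Real.Gamma β)).const_sub 1
    simpa using this
  have := (hdiv.mul_const ((t - a) ^ (β - 1))).mul hfac
  rw [mul_one] at this
  exact this
end

section
/- For α ∈ (0,1) and t ≥ 0, the Caputo–Fabrizio derivative with base point 0 of the sine function is CF D^α sin t = (1/((1−α)² + α²)) [α cos t + (1−α) sin t − α e^{−αt/(1−α)}]. -/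
open MeasureTheory Filter Real Set intervalIntegral

theorem stmt14 (α t : ℝ) (hα : α ∈ Set.Ioo (0:ℝ) 1) (ht : 0 ≤ t) :
    cfD α 0 (fun τ => Real.cos τ) t
      = (1 / ((1 - α) ^ 2 + α ^ 2))
        * (α * Real.cos t + (1 - α) * Real.sin t
            - α * Real.exp (-(α * t) / (1 - α))) := by
  obtain ⟨hα0, hα1⟩ := hα
  have h1 : (0:ℝ) < 1 - α := by linarith
  set k := α / (1 - α) with hk
  have hden : (k^2 + 1 : ℝ) ≠ 0 := by positivity
  have key : ∀ τ : ℝ, HasDerivAt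
      (fun τ => Real.exp (-(α*(t-τ))/(1-α)) * (k * Real.cos τ + Real.sin τ) / (k^2+1))
      (Real.cos τ * Real.exp (-(α*(t-τ))/(1-α))) τ := by
    intro τ
    have hg : HasDerivAt (fun τ : ℝ => -(α*(t-τ))/(1-α)) k τ := by
      have heq : (fun τ : ℝ => -(α*(t-τ))/(1-α)) = fun τ => (α*τ - α*t)/(1-α) := by
        funext x; ring
      rw [heq, hk]
      exact ((((hasDerivAt_id τ).const_mul α).sub_const (α*t)).div_const (1-α)).congr_deriv
        (by simp)
    have he := hg.exp
    have hc : HasDerivAt (fun τ => k * Real.cos τ + Real.sin τ)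
        (k * (-Real.sin τ) + Real.cos τ) τ :=
      ((Real.hasDerivAt_cos τ).const_mul k).add (Real.hasDerivAt_sin τ)
    have h2 := (he.mul hc).div_const (k^2+1)
    refine h2.congr_deriv ?_
    rw [div_eq_iff hden]
    ring
  have hcont : Continuous fun τ => Real.cos τ * Real.exp (-(α*(t-τ))/(1-α)) := by
    fun_prop
  have hint := intervalIntegral.integral_eq_sub_of_hasDerivAt
    (f := fun τ => Real.exp (-(α*(t-τ))/(1-α)) * (k * Real.cos τ + Real.sin τ) / (k^2+1))
    (fun τ _ => key τ) (hcont.intervalIntegrable 0 t)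
  unfold cfD
  rw [hint]
  simp only [sub_self, mul_zero, neg_zero, zero_div, Real.exp_zero, sub_zero,
    Real.cos_zero, Real.sin_zero, mul_one, add_zero, one_mul]
  rw [hk]
  have h3 : ((1-α)^2 + α^2 : ℝ) ≠ 0 := by positivity
  field_simp
  ring
end

section
/- CF D^α sin 0 = 0 for every α ∈ (0,1), while for every fixed t > 0, lim_{α→1⁻} CF D^α sin t = cos t; hence the pointwise limit of CF D^α sin at α → 1⁻ fails to equal cos at the base point t = 0 (since cos 0 = 1 ≠ 0). -/
open MeasureTheory Filter Real Set intervalIntegral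

lemma cf_integral (c t : ℝ) :
    (∫ τ in (0:ℝ)..t, Real.cos τ * Real.exp (c*τ - c*t))
      = Real.exp (c*t - c*t) * (c * Real.cos t + Real.sin t) / (c^2+1)
        - Real.exp (c*0 - c*t) * (c * Real.cos 0 + Real.sin 0) / (c^2+1) := by
  have hc : c^2 + 1 ≠ 0 := by positivity
  have hderiv : ∀ τ ∈ Set.uIcc (0:ℝ) t,
      HasDerivAt (fun x => Real.exp (c*x - c*t) * (c * Real.cos x + Real.sin x) / (c^2+1))
        (Real.cos τ * Real.exp (c*τ - c*t)) τ := by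
    intro τ _
    have h1 : HasDerivAt (fun x : ℝ => Real.exp (c*x - c*t)) (Real.exp (c*τ - c*t) * c) τ := by
      have h : HasDerivAt (fun x : ℝ => c*x - c*t) c τ := by
        simpa using ((hasDerivAt_id τ).const_mul c).sub_const (c*t)
      exact h.exp
    have h2 : HasDerivAt (fun x : ℝ => c * Real.cos x + Real.sin x)
        (c * (-Real.sin τ) + Real.cos τ) τ :=
      ((Real.hasDerivAt_cos τ).const_mul c).add (Real.hasDerivAt_sin τ)
    have h3 := (h1.mul h2).div_const (c^2+1)
    refine h3.congr_deriv ?_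
    rw [div_eq_iff hc]
    ring
  rw [intervalIntegral.integral_eq_sub_of_hasDerivAt hderiv]
  exact (Continuous.intervalIntegrable (by continuity) _ _)

lemma cf_formula (α t : ℝ) (hα : α ∈ Set.Ioo (0:ℝ) 1) :
    cfD α 0 (fun τ => Real.cos τ) t
      = (α * Real.cos t + (1-α) * Real.sin t - α * Real.exp (-(α*t)/(1-α)))
          / (α^2 + (1-α)^2) := by
  obtain ⟨h0, h1⟩ := hα
  have h1α : (0:ℝ) < 1 - α := by linarith
  set c := α / (1 - α) with hc
  have hrw : ∀ τ : ℝ, -(α * (t - τ)) / (1 - α) = c*τ - c*t := by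
    intro τ; rw [hc]; field_simp; ring
  have hint : (∫ τ in (0:ℝ)..t, Real.cos τ * Real.exp (-(α * (t - τ)) / (1 - α)))
      = Real.exp (c*t - c*t) * (c * Real.cos t + Real.sin t) / (c^2+1)
        - Real.exp (c*0 - c*t) * (c * Real.cos 0 + Real.sin 0) / (c^2+1) := by
    simp only [hrw]
    exact cf_integral c t
  unfold cfD
  rw [hint]
  have hd : (0:ℝ) < α^2 + (1-α)^2 := by positivity
  have hexp : c*0 - c*t = -(α*t)/(1-α) := by rw [hc]; field_simp; ring
  rw [hexp, hc]
  simp only [Real.cos_zero, Real.sin_zero, sub_self, Real.exp_zero]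
  field_simp
  ring

theorem stmt16 :
    (∀ α ∈ Set.Ioo (0:ℝ) 1, cfD α 0 (fun τ => Real.cos τ) 0 = 0) ∧
    (∀ t : ℝ, 0 < t →
      Filter.Tendsto (fun α : ℝ => cfD α 0 (fun τ => Real.cos τ) t)
        (nhdsWithin 1 (Set.Ioo (0:ℝ) 1)) (nhds (Real.cos t))) ∧
    Real.cos 0 = 1 := by
  refine ⟨?_, ?_, Real.cos_zero⟩
  · intro α hα; simp [cfD]
  · intro t ht
    have heq : ∀ᶠ α in nhdsWithin 1 (Set.Ioo (0:ℝ) 1),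
        (α * Real.cos t + (1-α) * Real.sin t - α * Real.exp (-(α*t)/(1-α)))
          / (α^2 + (1-α)^2) = cfD α 0 (fun τ => Real.cos τ) t := by
      filter_upwards [self_mem_nhdsWithin] with α hα
      exact (cf_formula α t hα).symm
    refine Filter.Tendsto.congr' heq ?_
    have hid : Filter.Tendsto (fun α : ℝ => α) (nhdsWithin 1 (Set.Ioo (0:ℝ) 1)) (nhds 1) :=
      tendsto_id.mono_left nhdsWithin_le_nhds
    have hsub : Filter.Tendsto (fun α : ℝ => (1:ℝ) - α) (nhdsWithin 1 (Set.Ioo (0:ℝ) 1))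
        (nhdsWithin 0 (Set.Ioi (0:ℝ))) := by
      apply tendsto_nhdsWithin_of_tendsto_nhds_of_eventually_within
      · have : Filter.Tendsto (fun α : ℝ => (1:ℝ) - α) (nhds 1) (nhds (1 - 1)) :=
          (continuous_const.sub continuous_id).tendsto 1
        simpa using this.mono_left nhdsWithin_le_nhds
      · filter_upwards [self_mem_nhdsWithin] with α hα
        simpa using hα.2
    have hinv : Filter.Tendsto (fun α : ℝ => (1-α)⁻¹) (nhdsWithin 1 (Set.Ioo (0:ℝ) 1)) atTop :=
      tendsto_inv_nhdsGT_zero.comp hsub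
    have hratio : Filter.Tendsto (fun α : ℝ => α * (1-α)⁻¹)
        (nhdsWithin 1 (Set.Ioo (0:ℝ) 1)) atTop :=
      hid.pos_mul_atTop (by norm_num) hinv
    have hexp : Filter.Tendsto (fun α : ℝ => Real.exp (-(α*t)/(1-α)))
        (nhdsWithin 1 (Set.Ioo (0:ℝ) 1)) (nhds 0) := by
      have harg : Filter.Tendsto (fun α : ℝ => -(α*t)/(1-α))
          (nhdsWithin 1 (Set.Ioo (0:ℝ) 1)) atBot := by
        have heq2 : ∀ α : ℝ, -(α*t)/(1-α) = -(t * (α * (1-α)⁻¹)) := by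
          intro α; field_simp
        simp only [heq2]
        exact tendsto_neg_atTop_atBot.comp (hratio.const_mul_atTop ht)
      exact Real.tendsto_exp_atBot.comp harg
    have hnum : Filter.Tendsto
        (fun α : ℝ => α * Real.cos t + (1-α) * Real.sin t - α * Real.exp (-(α*t)/(1-α)))
        (nhdsWithin 1 (Set.Ioo (0:ℝ) 1)) (nhds (Real.cos t)) := by
      have h := ((hid.mul_const (Real.cos t)).add
        (((tendsto_const_nhds (x := (1:ℝ))).sub hid).mul_const (Real.sin t))).sub (hid.mul hexp)
      simpa using h
    have hden : Filter.Tendsto (fun α : ℝ => α^2 + (1-α)^2)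
        (nhdsWithin 1 (Set.Ioo (0:ℝ) 1)) (nhds 1) := by
      have h := (hid.pow 2).add (((tendsto_const_nhds (x := (1:ℝ))).sub hid).pow 2)
      simpa using h
    convert hnum.div hden one_ne_zero using 2 <;> simp
end

section
/- Let u ∈ C¹([a,b]), α ∈ (0,1), and f continuous with u solving CF_a D^α u(t) = f(t) on [a,b] and f(a) = 0. Then u(t) − u(a) = (1−α) f(t) + α ∫_a^t f(τ) dτ for all t ∈ [a,b] (Barrow's rule for the Caputo–Fabrizio integral). -/
open MeasureTheory Filter Real Set intervalIntegral
open Topology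

theorem stmt17 (a b : ℝ) (hab : a < b) (u u' f : ℝ → ℝ)
    (hder : ∀ s ∈ Set.Icc a b, HasDerivAt u (u' s) s)
    (hu'cont : ContinuousOn u' (Set.Icc a b))
    (hfcont : ContinuousOn f (Set.Icc a b))
    (α : ℝ) (hα : α ∈ Set.Ioo (0:ℝ) 1)
    (hsol : ∀ t ∈ Set.Icc a b, cfD α a u' t = f t)
    (hfa : f a = 0) :
    ∀ t ∈ Set.Icc a b, u t - u a = (1 - α) * f t + α * ∫ τ in a..t, f τ := by
  obtain ⟨hα0, hα1⟩ := hα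
  set β : ℝ := 1 - α with hβdef
  have hβ : 0 < β := by simp [hβdef]; linarith
  set c : ℝ := α / β with hcdef
  have hβc : β * c = α := by rw [hcdef, mul_div_cancel₀ _ hβ.ne']
  -- the auxiliary integrand
  set v : ℝ → ℝ := fun τ => u' τ * Real.exp (c * τ) with hvdef
  have hvcont : ContinuousOn v (Set.Icc a b) :=
    hu'cont.mul ((Real.continuous_exp.comp (continuous_const.mul continuous_id)).continuousOn)
  set G : ℝ → ℝ := fun t => ∫ τ in a..t, v τ with hGdef
  -- key identity from the solution hypothesis
  have hkey : ∀ t ∈ Set.Icc a b, G t = β * Real.exp (c * t) * f t := by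
    intro t ht
    have h1 := hsol t ht
    unfold cfD at h1
    have h2 : ∀ τ : ℝ, u' τ * Real.exp (-(α * (t - τ)) / (1 - α))
        = Real.exp (-(c * t)) * v τ := by
      intro τ
      have hexp : -(α * (t - τ)) / (1 - α) = -(c * t) + c * τ := by
        rw [hcdef, ← hβdef]; field_simp; ring
      rw [hexp, Real.exp_add, hvdef]; ring
    rw [intervalIntegral.integral_congr (fun τ _ => h2 τ),
        intervalIntegral.integral_const_mul] at h1
    have hG : Real.exp (-(c * t)) * G t = β * f t := by
      rw [← hβdef] at h1
      field_simp at h1 ⊢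
      linarith [h1]
    have := congrArg (fun x => Real.exp (c * t) * x) hG
    simp only [← mul_assoc, ← Real.exp_add] at this
    simpa [mul_comm, mul_left_comm, mul_assoc] using this
  -- membership lemma: Icc a b is a right-neighborhood of any x ∈ Ico a b
  have hmemIci : ∀ x ∈ Set.Ico a b, Set.Icc a b ∈ 𝓝[Set.Ici x] x := by
    intro x hx
    filter_upwards [mem_nhdsWithin_of_mem_nhds (Iio_mem_nhds hx.2),
      self_mem_nhdsWithin] with y h1 h2
    exact ⟨le_trans hx.1 h2, le_of_lt h1⟩
  have hmemIoi : ∀ x ∈ Set.Ico a b, Set.Icc a b ∈ 𝓝[Set.Ioi x] x := by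
    intro x hx
    filter_upwards [mem_nhdsWithin_of_mem_nhds (Iio_mem_nhds hx.2),
      self_mem_nhdsWithin] with y h1 h2
    exact ⟨le_trans hx.1 (le_of_lt h2), le_of_lt h1⟩
  -- derivative of a primitive of a continuous-on-Icc function, within Ici x
  have hprim : ∀ (w : ℝ → ℝ), ContinuousOn w (Set.Icc a b) →
      ∀ x ∈ Set.Ico a b,
      HasDerivWithinAt (fun t => ∫ τ in a..t, w τ) (w x) (Set.Ici x) x := by
    intro w hw x hx
    have hxmem : x ∈ Set.Icc a b := ⟨hx.1, le_of_lt hx.2⟩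
    have hint : IntervalIntegrable w volume a x := by
      apply ContinuousOn.intervalIntegrable
      apply hw.mono
      rw [Set.uIcc_of_le hx.1]
      exact Set.Icc_subset_Icc le_rfl (le_of_lt hx.2)
    have hmeas : StronglyMeasurableAtFilter w (𝓝[Set.Ioi x] x) volume :=
      ⟨Set.Icc a b, hmemIoi x hx, hw.aestronglyMeasurable measurableSet_Icc⟩
    have hcw : ContinuousWithinAt w (Set.Ioi x) x :=
      (hw x hxmem).mono_of_mem_nhdsWithin (hmemIoi x hx)
    exact intervalIntegral.integral_hasDerivWithinAt_right hint hmeas hcw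
  -- derivative of G
  have hGder : ∀ x ∈ Set.Ico a b, HasDerivWithinAt G (v x) (Set.Ici x) x :=
    fun x hx => hprim v hvcont x hx
  -- f has a right derivative
  have hfder : ∀ x ∈ Set.Ico a b,
      HasDerivWithinAt f (u' x / β - c * f x) (Set.Ici x) x := by
    intro x hx
    have hxmem : x ∈ Set.Icc a b := ⟨hx.1, le_of_lt hx.2⟩
    -- F t = (1/β) * (exp (-(c*t)) * G t)
    have hfeq : ∀ y ∈ Set.Icc a b, f y = (1/β) * (Real.exp (-(c * y)) * G y) := by
      intro y hy
      rw [hkey y hy, show Real.exp (-(c * y)) * (β * Real.exp (c * y) * f y)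
          = (Real.exp (-(c * y)) * Real.exp (c * y)) * (β * f y) by ring,
        ← Real.exp_add, neg_add_cancel, Real.exp_zero, one_mul]
      field_simp
    have hexpder : HasDerivWithinAt (fun t => Real.exp (-(c * t)))
        (-c * Real.exp (-(c * x))) (Set.Ici x) x := by
      have hlin : HasDerivAt (fun t : ℝ => -(c * t)) (-c) x := by
        have := ((hasDerivAt_id' x).const_mul c).neg; rw [mul_one] at this; exact this
      simpa [mul_comm] using hlin.exp.hasDerivWithinAt
    have hFder : HasDerivWithinAt (fun t => (1/β) * (Real.exp (-(c * t)) * G t))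
        ((1/β) * ((-c * Real.exp (-(c * x))) * G x + Real.exp (-(c * x)) * v x))
        (Set.Ici x) x :=
      (hexpder.mul (hGder x hx)).const_mul (1/β)
    have heq : f x = (1/β) * (Real.exp (-(c * x)) * G x) := hfeq x hxmem
    have hcongr : HasDerivWithinAt f
        ((1/β) * ((-c * Real.exp (-(c * x))) * G x + Real.exp (-(c * x)) * v x))
        (Set.Ici x) x := by
      apply hFder.congr_of_eventuallyEq _ heq
      filter_upwards [hmemIci x hx] with y hy
      exact hfeq y hy
    convert hcongr using 1
    have e1 : Real.exp (-(c * x)) * Real.exp (c * x) = 1 := by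
      rw [← Real.exp_add, neg_add_cancel, Real.exp_zero]
    rw [hkey x hxmem, hvdef]
    simp only
    rw [show -c * Real.exp (-(c * x)) * (β * Real.exp (c * x) * f x)
          + Real.exp (-(c * x)) * (u' x * Real.exp (c * x))
        = (Real.exp (-(c * x)) * Real.exp (c * x)) * (-c * β * f x + u' x) by ring,
      e1, one_mul]
    field_simp
    ring
  -- derivative of the primitive of f
  have hIder : ∀ x ∈ Set.Ico a b,
      HasDerivWithinAt (fun t => ∫ τ in a..t, f τ) (f x) (Set.Ici x) x :=
    fun x hx => hprim f hfcont x hx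
  -- right-hand side function
  set g : ℝ → ℝ := fun t => u a + (1 - α) * f t + α * ∫ τ in a..t, f τ with hgdef
  have hgder : ∀ x ∈ Set.Ico a b, HasDerivWithinAt g (u' x) (Set.Ici x) x := by
    intro x hx
    have h1 := ((hfder x hx).const_mul (1 - α)).add ((hIder x hx).const_mul α)
    have h2 := h1.const_add (u a)
    have hgeq : g = fun y => u a + ((1 - α) * f y + α * ∫ τ in a..y, f τ) := by
      funext y; rw [hgdef]; ring
    have hval : (1 - α) * (u' x / β - c * f x) + α * f x = u' x := by
      rw [← hβdef, mul_sub, mul_div_cancel₀ _ hβ.ne']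
      have e : β * (c * f x) = α * f x := by rw [← mul_assoc, hβc]
      linarith
    rw [hgeq, ← hval]
    exact h2
  have huder : ∀ x ∈ Set.Ico a b, HasDerivWithinAt u (u' x) (Set.Ici x) x :=
    fun x hx => (hder x ⟨hx.1, le_of_lt hx.2⟩).hasDerivWithinAt
  have hucont : ContinuousOn u (Set.Icc a b) :=
    fun t ht => (hder t ht).continuousAt.continuousWithinAt
  have hintcont : ContinuousOn (fun t => ∫ τ in a..t, f τ) (Set.Icc a b) := by
    have h1 : IntegrableOn f (Set.uIcc a b) volume := by
      rw [Set.uIcc_of_le (le_of_lt hab)]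
      exact hfcont.integrableOn_compact isCompact_Icc
    have := intervalIntegral.continuousOn_primitive_interval h1
    rwa [Set.uIcc_of_le (le_of_lt hab)] at this
  have hgcont : ContinuousOn g (Set.Icc a b) :=
    ((continuousOn_const.add (continuousOn_const.mul hfcont)).add
      (continuousOn_const.mul hintcont))
  have hia : u a = g a := by
    simp [hgdef, hfa, intervalIntegral.integral_same]
  have := eq_of_has_deriv_right_eq huder hgder hucont hgcont hia
  intro t ht
  have h := this t ht
  rw [hgdef] at h
  simp only at h
  rw [hβdef]
  linarith
end
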